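/- arXiv:2510.18048 — 3 statements merged into one kernel-verified Lean document; each statement's English description precedes it below -/
import Mathlib

section
/- For every integer n ≥ 2, there exists a graph homomorphism φ from the disjoint union of n copies of the sunlet graph S¹_{4n} to the toroidal grid C_{2n} □ C_{2n} such that (i) the induced map on edge sets is a bijection, (ii) every vertex of C_{2n} □ C_{2n} has exactly two φ-preimages, and (iii) φ is injective on the set of all cycle vertices of the n sunlets (so the n sunlet cycles map isomorphically onto n pairwise vertex-disjoint cycles of length 4n). -/
/-- The sunlet graph `S¹_p` on vertex set `ZMod p ⊕ ZMod p`. -/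
def sunlet (p : ℕ) : SimpleGraph (ZMod p ⊕ ZMod p) :=
  SimpleGraph.fromRel (fun u w =>
    match u, w with
    | Sum.inl a, Sum.inl b => b = a + 1
    | Sum.inl a, Sum.inr b => a = b
    | _, _ => False)

/-- The toroidal grid `C_n □ C_n` on vertex set `ZMod n × ZMod n`. -/
def torGrid (n : ℕ) : SimpleGraph (ZMod n × ZMod n) :=
  SimpleGraph.fromRel (fun u w =>
    (u.1 = w.1 ∧ w.2 = u.2 + 1) ∨ (u.2 = w.2 ∧ w.1 = u.1 + 1))

/-- The disjoint union of `m` copies of a graph `H`: vertex set `Fin m × V`,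
with `(i,u)` adjacent to `(j,w)` iff `i = j` and `u` adjacent to `w`. -/
def copies (m : ℕ) {V : Type*} (H : SimpleGraph V) : SimpleGraph (Fin m × V) where
  Adj a b := a.1 = b.1 ∧ H.Adj a.2 b.2
  symm := ⟨fun a b h => ⟨h.1.symm, h.2.symm⟩⟩
  loopless := ⟨fun a h => H.loopless.irrefl a.2 h.2⟩

/-!
Staircase `i` runs along the two diagonals `x - y = 2i, 2i + 1` of the torus, stepping alternately
right and up: its cycle vertex `k` sits at `(2i + ⌈k/2⌉, ⌊k/2⌋)`, and the leaf at `k` hangs off in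
the direction the cycle does not take next (up for even `k`, right for odd `k`). The `n` staircases
fill the `2n` diagonals, so the cycle vertices biject onto the torus; so do the leaves, because a
leaf has the opposite checkerboard colour to its cycle vertex. Orienting every torus edge as
`(v, v + step)` and every sunlet edge away from its cycle vertex `k`, the edge map reads
`(v, t) ↦ (v, t xor parity k)`, which is again a bijection.
-/

open Function Set

lemma ZMod.natCast_inj_of_lt {m a b : ℕ} (ha : a < m) (hb : b < m) :
    (a : ZMod m) = b ↔ a = b := by
  refine ⟨fun h => ?_, congrArg _⟩
  simpa [ZMod.val_natCast_of_lt ha, ZMod.val_natCast_of_lt hb] using congrArg ZMod.val h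

lemma ZMod.two_ne_zero_of_two_lt {m : ℕ} (hm : 2 < m) : (2 : ZMod m) ≠ 0 := by
  exact_mod_cast (ZMod.natCast_inj_of_lt (a := 2) (b := 0) hm (by omega)).not.2 (by omega)

lemma Nat.bodd_eq_of_zmod_two_cast_eq {a b : ℕ} (h : (a : ZMod 2) = b) : a.bodd = b.bodd := by
  rw [ZMod.natCast_eq_natCast_iff', Nat.mod_two_of_bodd, Nat.mod_two_of_bodd] at h
  revert h
  cases a.bodd <;> cases b.bodd <;> simp

namespace SimpleGraph

variable {V W α β : Type*} {G : SimpleGraph V} {G' : SimpleGraph W}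

lemma adj_of_map_mem_edgeSet {S : α → Sym2 V} (hS : SurjOn S univ G.edgeSet) {f : V → W}
    (hf : ∀ a, Sym2.map f (S a) ∈ G'.edgeSet) {u w : V} (huw : G.Adj u w) :
    G'.Adj (f u) (f w) := by
  obtain ⟨a, -, ha⟩ := hS (G.mem_edgeSet.2 huw)
  simpa [ha] using hf a

lemma bijective_mapEdgeSet_of_bijOn {φ : G →g G'} {S : α → Sym2 V} {T : β → Sym2 W}
    {M : α → β} (hS : BijOn S univ G.edgeSet) (hT : BijOn T univ G'.edgeSet)
    (hM : Bijective M) (hφ : ∀ a, Sym2.map φ (S a) = T (M a)) :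
    Bijective φ.mapEdgeSet := by
  refine ⟨?_, ?_⟩
  · rintro ⟨e₁, he₁⟩ ⟨e₂, he₂⟩ he
    obtain ⟨a₁, -, rfl⟩ := hS.surjOn he₁
    obtain ⟨a₂, -, rfl⟩ := hS.surjOn he₂
    have hT₁₂ : T (M a₁) = T (M a₂) := by simpa [hφ] using congrArg Subtype.val he
    exact Subtype.ext (congrArg S (hM.1 (hT.injOn trivial trivial hT₁₂)))
  · rintro ⟨e, he⟩
    obtain ⟨b, -, rfl⟩ := hT.surjOn he
    obtain ⟨a, rfl⟩ := hM.2 b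
    exact ⟨⟨S a, hS.mapsTo trivial⟩, Subtype.ext (hφ a)⟩

end SimpleGraph

lemma natCard_preimage_singleton_eq_two {ι κ γ : Type*} (f : ι × (κ ⊕ κ) → γ)
    (hl : Bijective fun x : ι × κ => f (x.1, .inl x.2))
    (hr : Bijective fun x : ι × κ => f (x.1, .inr x.2)) (c : γ) :
    Nat.card (f ⁻¹' {c}) = 2 := by
  obtain ⟨⟨i, k⟩, hik⟩ := hl.2 c
  obtain ⟨⟨j, l⟩, hjl⟩ := hr.2 c
  have hfiber : f ⁻¹' {c} = {(i, .inl k), (j, .inr l)} := by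
    ext ⟨a, b | b⟩
    · simp only [mem_preimage, mem_singleton_iff, mem_insert_iff, reduceCtorEq, and_false,
        or_false, Prod.mk.injEq, Sum.inl.injEq]
      exact ⟨fun h => Prod.mk.inj (hl.1 (h.trans hik.symm) : ((a, b) : ι × κ) = (i, k)),
        by rintro ⟨rfl, rfl⟩; exact hik⟩
    · simp only [mem_preimage, mem_singleton_iff, mem_insert_iff, reduceCtorEq, and_false,
        false_or, Prod.mk.injEq, Sum.inr.injEq]
      exact ⟨fun h => Prod.mk.inj (hr.1 (h.trans hjl.symm) : ((a, b) : ι × κ) = (j, l)),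
        by rintro ⟨rfl, rfl⟩; exact hjl⟩
  rw [hfiber, Nat.card_coe_set_eq, ncard_pair (by simp)]

section Torus

variable {m : ℕ}

def torusStep : Bool → ZMod m × ZMod m
  | false => (1, 0)
  | true => (0, 1)

def torusEdge (x : (ZMod m × ZMod m) × Bool) : Sym2 (ZMod m × ZMod m) :=
  s(x.1, x.1 + torusStep x.2)

lemma torusStep_injective (hm : 1 < m) : Injective (torusStep (m := m)) := by
  have : Fact (1 < m) := ⟨hm⟩
  intro b c h
  cases b <;> cases c <;> simp_all [torusStep]

lemma torusStep_add_torusStep_ne_zero (hm : 2 < m) (b c : Bool) :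
    torusStep b + torusStep c ≠ (0 : ZMod m × ZMod m) := by
  have : Fact (1 < m) := ⟨by omega⟩
  cases b <;> cases c <;>
    simp [torusStep, Prod.ext_iff, one_add_one_eq_two, ZMod.two_ne_zero_of_two_lt hm]

lemma torGrid_adj_add_torusStep (hm : 1 < m) (v : ZMod m × ZMod m) (b : Bool) :
    (torGrid m).Adj v (v + torusStep b) := by
  have : Fact (1 < m) := ⟨hm⟩
  cases b <;> simp [torGrid, torusStep, Prod.ext_iff]

lemma torGrid_adj_iff (hm : 1 < m) {v w : ZMod m × ZMod m} :
    (torGrid m).Adj v w ↔ ∃ b, w = v + torusStep b ∨ v = w + torusStep b := by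
  refine ⟨fun h => ?_, ?_⟩
  · simp only [torGrid, SimpleGraph.fromRel_adj] at h
    rcases h.2 with (⟨h1, h2⟩ | ⟨h1, h2⟩) | (⟨h1, h2⟩ | ⟨h1, h2⟩)
    · exact ⟨true, .inl (Prod.ext (by simp [torusStep, h1]) (by simp [torusStep, h2]))⟩
    · exact ⟨false, .inl (Prod.ext (by simp [torusStep, h2]) (by simp [torusStep, h1]))⟩
    · exact ⟨true, .inr (Prod.ext (by simp [torusStep, h1]) (by simp [torusStep, h2]))⟩
    · exact ⟨false, .inr (Prod.ext (by simp [torusStep, h2]) (by simp [torusStep, h1]))⟩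
  · rintro ⟨b, rfl | rfl⟩
    · exact torGrid_adj_add_torusStep hm v b
    · exact (torGrid_adj_add_torusStep hm w b).symm

lemma torGrid_edgeSet_bijOn (hm : 2 < m) : BijOn torusEdge univ (torGrid m).edgeSet := by
  refine ⟨fun x _ => torGrid_adj_add_torusStep (by omega) x.1 x.2, ?_, ?_⟩
  · rintro ⟨v, b⟩ - ⟨w, c⟩ - h
    simp only [torusEdge] at h
    rcases Sym2.eq_iff.1 h with ⟨rfl, hbc⟩ | ⟨rfl, hw⟩
    · rw [torusStep_injective (by omega) (add_left_cancel hbc)]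
    · refine absurd ?_ (torusStep_add_torusStep_ne_zero hm c b)
      simpa [add_assoc] using hw
  · intro e he
    induction e using Sym2.ind with | _ v w => ?_
    rw [SimpleGraph.mem_edgeSet] at he
    obtain ⟨b, rfl | rfl⟩ := (torGrid_adj_iff (by omega)).1 he
    · exact ⟨(v, b), trivial, rfl⟩
    · exact ⟨(w, b), trivial, Sym2.eq_swap⟩

end Torus

section Sunlet

variable {p : ℕ}

def sunletNbr (k : ZMod p) : Bool → ZMod p ⊕ ZMod p
  | false => .inl (k + 1)
  | true => .inr k

def sunletEdge {n : ℕ} (x : Fin n × ZMod p × Bool) : Sym2 (Fin n × (ZMod p ⊕ ZMod p)) :=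
  s((x.1, .inl x.2.1), (x.1, sunletNbr x.2.1 x.2.2))

lemma sunlet_adj_sunletNbr (hp : 1 < p) (k : ZMod p) (b : Bool) :
    (sunlet p).Adj (.inl k) (sunletNbr k b) := by
  have : Fact (1 < p) := ⟨hp⟩
  cases b <;> simp [sunlet, sunletNbr]

lemma sunlet_adj_iff (hp : 1 < p) {x y : ZMod p ⊕ ZMod p} :
    (sunlet p).Adj x y ↔
      ∃ k b, (x = .inl k ∧ y = sunletNbr k b) ∨ (y = .inl k ∧ x = sunletNbr k b) := by
  refine ⟨fun h => ?_, ?_⟩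
  · simp only [sunlet, SimpleGraph.fromRel_adj] at h
    rcases x with a | a <;> rcases y with b | b <;> simp only [or_false, false_or] at h
    · rcases h.2 with rfl | rfl
      · exact ⟨a, false, .inl ⟨rfl, rfl⟩⟩
      · exact ⟨b, false, .inr ⟨rfl, rfl⟩⟩
    · exact ⟨a, true, .inl ⟨rfl, by rw [h.2]; rfl⟩⟩
    · exact ⟨b, true, .inr ⟨rfl, by rw [h.2]; rfl⟩⟩
    · exact h.2.elim
  · rintro ⟨k, b, ⟨rfl, rfl⟩ | ⟨rfl, rfl⟩⟩
    · exact sunlet_adj_sunletNbr hp k b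
    · exact (sunlet_adj_sunletNbr hp k b).symm

lemma sunletNbr_add_one_ne_inl (hp : 2 < p) (k : ZMod p) (b : Bool) :
    sunletNbr (k + 1) b ≠ .inl k := by
  cases b <;> simp [sunletNbr, add_assoc, one_add_one_eq_two, ZMod.two_ne_zero_of_two_lt hp]

lemma copies_sunlet_edgeSet_bijOn {n : ℕ} (hp : 2 < p) :
    BijOn (sunletEdge (n := n)) univ (copies n (sunlet p)).edgeSet := by
  refine ⟨fun x _ => ⟨rfl, sunlet_adj_sunletNbr (by omega) x.2.1 x.2.2⟩, ?_, ?_⟩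
  · rintro ⟨i, k, b⟩ - ⟨j, l, c⟩ - h
    rcases Sym2.eq_iff.1 h with ⟨hik, hbc⟩ | ⟨hil, hki⟩
    · simp only [Prod.mk.injEq, Sum.inl.injEq] at hik
      obtain ⟨rfl, rfl⟩ := hik
      cases b <;> cases c <;> simp_all [sunletNbr]
    · obtain ⟨-, hl⟩ := Prod.mk.inj hil
      obtain ⟨-, hk⟩ := Prod.mk.inj hki
      cases c
      · obtain rfl : k = l + 1 := Sum.inl.inj hl
        exact absurd hk (sunletNbr_add_one_ne_inl hp l b)
      · exact absurd hl (by simp [sunletNbr])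
  · intro e he
    induction e using Sym2.ind with | _ x y => ?_
    obtain ⟨hxy, hadj⟩ := (SimpleGraph.mem_edgeSet _).1 he
    obtain ⟨i, x⟩ := x
    obtain ⟨j, y⟩ := y
    obtain rfl : i = j := hxy
    obtain ⟨k, b, ⟨rfl, rfl⟩ | ⟨rfl, rfl⟩⟩ := (sunlet_adj_iff (by omega)).1 hadj
    · exact ⟨(i, k, b), trivial, rfl⟩
    · exact ⟨(i, k, b), trivial, Sym2.eq_swap⟩

end Sunlet

namespace Staircase

variable {n : ℕ}

def corner (n i j : ℕ) : ZMod (2 * n) × ZMod (2 * n) :=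
  ((2 * i + (j + 1) / 2 : ℕ), (j / 2 : ℕ))

lemma corner_succ (i j : ℕ) : corner n i (j + 1) = corner n i j + torusStep j.bodd := by
  obtain ⟨a, rfl | rfl⟩ := Nat.even_or_odd' j
  · have h₁ : (2 * a + 1 + 1) / 2 = a + 1 := by omega
    have h₂ : (2 * a + 1) / 2 = a := by omega
    simp [corner, torusStep, h₁, h₂, add_assoc]
  · have h₁ : (2 * a + 1 + 1 + 1) / 2 = a + 1 := by omega
    have h₂ : (2 * a + 1 + 1) / 2 = a + 1 := by omega
    have h₃ : (2 * a + 1) / 2 = a := by omega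
    simp [corner, torusStep, h₁, h₂, h₃]

lemma corner_four_mul (i : ℕ) : corner n i (4 * n) = corner n i 0 := by
  have h₁ : (4 * n + 1) / 2 = 2 * n := by omega
  have h₂ : 4 * n / 2 = 2 * n := by omega
  simp [corner, h₁, h₂]

lemma corner_fst_sub_snd (i j : ℕ) :
    (corner n i j).1 - (corner n i j).2 = ((2 * i + j % 2 : ℕ) : ZMod (2 * n)) := by
  have h : (j + 1) / 2 = j / 2 + j % 2 := by omega
  simp only [corner, h]
  push_cast
  ring

def checkerboard (v : ZMod (2 * n) × ZMod (2 * n)) : ZMod 2 :=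
  ZMod.castHom (dvd_mul_right 2 n) (ZMod 2) (v.1 + v.2)

lemma checkerboard_add_torusStep (v : ZMod (2 * n) × ZMod (2 * n)) (b : Bool) :
    checkerboard (v + torusStep b) = checkerboard v + 1 := by
  cases b <;> simp [checkerboard, torusStep] <;> ring

lemma checkerboard_corner (i j : ℕ) : checkerboard (corner n i j) = j := by
  have h : 2 * i + (j + 1) / 2 + j / 2 = j + 2 * i := by omega
  simp only [checkerboard, corner, map_natCast, ← Nat.cast_add, h]
  simp [show (2 : ZMod 2) = 0 from rfl]

def staircase (n : ℕ) (x : Fin n × ZMod (4 * n)) : ZMod (2 * n) × ZMod (2 * n) :=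
  corner n x.1 x.2.val

def staircaseLeaf (n : ℕ) (x : Fin n × ZMod (4 * n)) : ZMod (2 * n) × ZMod (2 * n) :=
  staircase n x + torusStep (!x.2.val.bodd)

def cover (n : ℕ) : Fin n × (ZMod (4 * n) ⊕ ZMod (4 * n)) → ZMod (2 * n) × ZMod (2 * n)
  | (i, .inl k) => staircase n (i, k)
  | (i, .inr k) => staircaseLeaf n (i, k)

def orientedImage (n : ℕ) (x : Fin n × ZMod (4 * n) × Bool) :
    (ZMod (2 * n) × ZMod (2 * n)) × Bool :=
  (staircase n (x.1, x.2.1), xor x.2.2 x.2.1.val.bodd)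

lemma natCard_torus_le :
    Nat.card (ZMod (2 * n) × ZMod (2 * n)) ≤ Nat.card (Fin n × ZMod (4 * n)) := by
  rw [Nat.card_prod, Nat.card_prod, Nat.card_zmod, Nat.card_zmod, Nat.card_eq_fintype_card,
    Fintype.card_fin]
  exact le_of_eq (by ring)

variable [NeZero n]

lemma staircase_add_one (i : Fin n) (k : ZMod (4 * n)) :
    staircase n (i, k + 1) = staircase n (i, k) + torusStep k.val.bodd := by
  have hk := k.val_lt
  have : Fact (1 < 4 * n) := ⟨by have := NeZero.pos n; omega⟩
  have hval : (k + 1).val = (k.val + 1) % (4 * n) := by rw [ZMod.val_add, ZMod.val_one]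
  rw [staircase, staircase, hval, ← corner_succ]
  rcases (by omega : k.val + 1 < 4 * n ∨ k.val + 1 = 4 * n) with h | h
  · rw [Nat.mod_eq_of_lt h]
  · rw [h, Nat.mod_self, corner_four_mul]

lemma staircase_injective : Injective (staircase n) := by
  rintro ⟨i, k⟩ ⟨j, l⟩ h
  have hk := k.val_lt
  have hl := l.val_lt
  have hrow : k.val / 2 = l.val / 2 :=
    (ZMod.natCast_inj_of_lt (by omega) (by omega)).1 (congrArg Prod.snd h)
  have hdiag : 2 * i + k.val % 2 = 2 * j + l.val % 2 := by
    have := congrArg (fun v => v.1 - v.2) h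
    simp only [staircase, corner_fst_sub_snd] at this
    exact (ZMod.natCast_inj_of_lt (by omega) (by omega)).1 this
  obtain rfl : i = j := Fin.ext (by omega)
  obtain rfl : k = l := ZMod.val_injective _ (by omega)
  rfl

lemma staircaseLeaf_injective : Injective (staircaseLeaf n) := by
  intro x y h
  have hparity : x.2.val.bodd = y.2.val.bodd := by
    have := congrArg checkerboard h
    simp only [staircaseLeaf, staircase, checkerboard_add_torusStep, checkerboard_corner,
      add_left_inj] at this
    exact Nat.bodd_eq_of_zmod_two_cast_eq this
  rw [staircaseLeaf, staircaseLeaf, hparity, add_left_inj] at h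
  exact staircase_injective h

lemma staircase_bijective : Bijective (staircase n) :=
  staircase_injective.bijective_of_nat_card_le natCard_torus_le

lemma staircaseLeaf_bijective : Bijective (staircaseLeaf n) :=
  staircaseLeaf_injective.bijective_of_nat_card_le natCard_torus_le

lemma orientedImage_bijective : Bijective (orientedImage n) := by
  refine ⟨?_, fun y => ?_⟩
  · rintro ⟨i, k, b⟩ ⟨j, l, c⟩ h
    simp only [orientedImage, Prod.mk.injEq] at h
    obtain ⟨⟨rfl, rfl⟩, hbc⟩ := h.imp (fun h => Prod.mk.inj (staircase_injective h)) id
    rw [Bool.xor_left_inj.1 hbc]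
  · obtain ⟨⟨i, k⟩, hik⟩ := staircase_bijective.2 y.1
    exact ⟨(i, k, xor y.2 k.val.bodd), by simp [orientedImage, hik]⟩

lemma map_cover_sunletEdge (x : Fin n × ZMod (4 * n) × Bool) :
    Sym2.map (cover n) (sunletEdge x) = torusEdge (orientedImage n x) := by
  obtain ⟨i, k, _ | _⟩ := x
  · simp [sunletEdge, sunletNbr, torusEdge, orientedImage, cover, staircase_add_one]
  · simp [sunletEdge, sunletNbr, torusEdge, orientedImage, cover, staircaseLeaf]

end Staircase

open SimpleGraph Staircase in
/-- For `n ≥ 2` there is a homomorphism from the disjoint union of `n` copies of the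
sunlet `S¹_{4n}` to `C_{2n} □ C_{2n}` which is bijective on edges, 2-to-1 on vertices,
and injective on the cycle vertices of the sunlets. -/
theorem sunlet_covering_staircase (n : ℕ) (hn : 2 ≤ n) :
    ∃ φ : copies n (sunlet (4 * n)) →g torGrid (2 * n),
      Function.Bijective φ.mapEdgeSet ∧
      (∀ v : ZMod (2 * n) × ZMod (2 * n),
        Nat.card (⇑φ ⁻¹' {v} : Set (Fin n × (ZMod (4 * n) ⊕ ZMod (4 * n)))) = 2) ∧
      Function.Injective (fun ik : Fin n × ZMod (4 * n) => φ (ik.1, Sum.inl ik.2)) := by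
  have : NeZero n := ⟨by omega⟩
  have hS := copies_sunlet_edgeSet_bijOn (n := n) (p := 4 * n) (by omega)
  have hT := torGrid_edgeSet_bijOn (m := 2 * n) (by omega)
  let φ : copies n (sunlet (4 * n)) →g torGrid (2 * n) :=
    ⟨cover n, adj_of_map_mem_edgeSet hS.surjOn fun x =>
      map_cover_sunletEdge x ▸ hT.mapsTo trivial⟩
  exact ⟨φ, bijective_mapEdgeSet_of_bijOn hS hT orientedImage_bijective map_cover_sunletEdge,
    natCard_preimage_singleton_eq_two φ staircase_bijective staircaseLeaf_bijective,
    staircase_injective⟩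
end

section
/- For every integer n ≥ 2, the edge set of the toroidal grid C_{2n} □ C_{2n} can be partitioned into n² pairwise edge-disjoint subgraphs, each of which is isomorphic to the sunlet graph S¹_4. -/
/-!
Put a copy of `S¹_4` at every point `c` of the torus with both coordinates even: its 4-cycle
is the unit square with lower left corner `c`, and its four pendant edges leave the corners of
the square like the blades of a pinwheel. Every edge of the torus is `{u, u + d}` for a unit step
`d`, and each of the eight combinations of the parity class of `u` and the direction `d` occurs
among the edges of the pinwheel, so the `n²` pinwheels cover the torus. Together they have `8n²`
edges, exactly as many as the 4-regular torus on `4n²` vertices, so they cover every edge once.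
-/

open SimpleGraph Finset

namespace SimpleGraph.Copy

variable {α β ι : Type*} {H : SimpleGraph α} {G : SimpleGraph β}

lemma mem_edgeSet_toSubgraph {f : Copy H G} {e : Sym2 β} :
    e ∈ f.toSubgraph.edgeSet ↔ ∃ e' ∈ H.edgeSet, Sym2.map f e' = e := by
  simp [Subgraph.edgeSet_map]

theorem existsUnique_mem_edgeSet_toSubgraph_of_card_le [Finite ι] [Finite H.edgeSet]
    (f : ι → Copy H G) (hcover : ∀ e ∈ G.edgeSet, ∃ i, e ∈ (f i).toSubgraph.edgeSet)
    (hcard : Nat.card ι * Nat.card H.edgeSet ≤ Nat.card G.edgeSet) :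
    ∀ e ∈ G.edgeSet, ∃! i, e ∈ (f i).toSubgraph.edgeSet := by
  let Ψ : ι × H.edgeSet → G.edgeSet := fun p ↦ (f p.1).mapEdgeSet p.2
  have hΨ : Ψ.Surjective := by
    rintro ⟨e, he⟩
    obtain ⟨i, hi⟩ := hcover e he
    obtain ⟨e', he', rfl⟩ := mem_edgeSet_toSubgraph.1 hi
    exact ⟨(i, ⟨e', he'⟩), rfl⟩
  have hΨinj := (hΨ.bijective_of_nat_card_le (by rwa [Nat.card_prod])).injective
  intro e he
  obtain ⟨i, hi⟩ := hcover e he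
  refine ⟨i, hi, fun j hj ↦ ?_⟩
  obtain ⟨e₁, he₁, rfl⟩ := mem_edgeSet_toSubgraph.1 hi
  obtain ⟨e₂, he₂, h⟩ := mem_edgeSet_toSubgraph.1 hj
  exact congrArg Prod.fst
    (hΨinj (a₁ := (j, ⟨e₂, he₂⟩)) (a₂ := (i, ⟨e₁, he₁⟩)) (Subtype.ext h))

end SimpleGraph.Copy

theorem ZMod.intCast_injOn_Ico (m : ℕ) (a : ℤ) :
    Set.InjOn (Int.cast : ℤ → ZMod m) (Set.Ico a (a + m)) := by
  intro x hx y hy h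
  rw [ZMod.intCast_eq_intCast_iff_dvd_sub] at h
  have := Int.eq_zero_of_abs_lt_dvd h
    (abs_sub_lt_iff.2 ⟨by linarith [hx.1, hy.2], by linarith [hx.2, hy.1]⟩)
  linarith

def intCastPair (m : ℕ) : ℤ × ℤ →+ ZMod m × ZMod m :=
  (Int.castAddHom (ZMod m)).prodMap (Int.castAddHom (ZMod m))

@[simp] lemma intCastPair_apply (m : ℕ) (p : ℤ × ℤ) :
    intCastPair m p = ((p.1 : ZMod m), (p.2 : ZMod m)) := rfl

lemma intCastPair_injOn (m : ℕ) (a b : ℤ) :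
    Set.InjOn (intCastPair m) (Set.Ico a (a + m) ×ˢ Set.Ico b (b + m)) := by
  rintro ⟨x₁, x₂⟩ ⟨hx₁, hx₂⟩ ⟨y₁, y₂⟩ ⟨hy₁, hy₂⟩ h
  simp only [intCastPair_apply, Prod.mk.injEq] at h
  exact Prod.ext (ZMod.intCast_injOn_Ico m a hx₁ hy₁ h.1)
    (ZMod.intCast_injOn_Ico m b hx₂ hy₂ h.2)

def unitSteps : Finset (ℤ × ℤ) := {(1, 0), (0, 1)}

theorem torGrid_eq_circulantGraph (m : ℕ) :
    torGrid m = circulantGraph (intCastPair m '' unitSteps) := by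
  ext u v
  simp only [torGrid, unitSteps, fromRel_adj, circulantGraph_adj, coe_insert, coe_singleton,
    Set.image_insert_eq, Set.image_singleton, intCastPair_apply, Int.cast_one, Int.cast_zero,
    Set.mem_insert_iff, Set.mem_singleton_iff, Prod.ext_iff, Prod.fst_sub, Prod.snd_sub]
  grind

theorem torGrid_eq_boxProd (m : ℕ) : torGrid m = circulantGraph {1} □ circulantGraph {1} := by
  ext u v
  simp only [torGrid, fromRel_adj, boxProd_adj, circulantGraph_adj, Set.mem_singleton_iff]
  grind

lemma degree_circulantGraph_one {m : ℕ} (hm : 3 ≤ m) (v : ZMod m)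
    [Fintype ((circulantGraph ({1} : Set (ZMod m))).neighborSet v)] :
    (circulantGraph ({1} : Set (ZMod m))).degree v = 2 := by
  have h2 : (2 : ZMod m) ≠ 0 := by
    simpa using (ZMod.natCast_eq_zero_iff 2 m).not.2 (Nat.not_dvd_of_pos_of_lt two_pos (by omega))
  have hN : (circulantGraph {1}).neighborSet v = {v - 1, v + 1} := by
    ext w
    simp only [mem_neighborSet, circulantGraph_adj, Set.mem_singleton_iff, Set.mem_insert_iff]
    grind
  rw [← card_neighborSet_eq_degree, Fintype.card_congr (Equiv.setCongr hN),
    Fintype.card_eq_nat_card, Nat.card_coe_set_eq,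
    Set.ncard_pair fun h ↦ h2 (by linear_combination -h)]

theorem natCard_edgeSet_torGrid {m : ℕ} (hm : 3 ≤ m) :
    Nat.card (torGrid m).edgeSet = 2 * m ^ 2 := by
  classical
  have : NeZero m := ⟨by omega⟩
  have hsum := sum_degrees_eq_twice_card_edges
    (circulantGraph ({1} : Set (ZMod m)) □ circulantGraph ({1} : Set (ZMod m)))
  simp only [degree_boxProd, degree_circulantGraph_one hm, sum_const, card_univ,
    Fintype.card_prod, ZMod.card, smul_eq_mul] at hsum
  rw [torGrid_eq_boxProd, Nat.card_eq_fintype_card, ← edgeFinset_card]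
  lia

instance (p : ℕ) : DecidableRel (sunlet p).Adj
  | .inl a, .inl b => inferInstanceAs (Decidable (_ ∧ (b = a + 1 ∨ a = b + 1)))
  | .inl a, .inr b => inferInstanceAs (Decidable (_ ∧ (a = b ∨ False)))
  | .inr _, .inl b => inferInstanceAs (Decidable (_ ∧ (False ∨ b = _)))
  | .inr _, .inr _ => inferInstanceAs (Decidable (_ ∧ (False ∨ False)))

lemma natCard_edgeSet_sunlet_four : Nat.card (sunlet 4).edgeSet = 8 := by
  rw [Nat.card_eq_fintype_card, ← edgeFinset_card]
  decide

def pinwheelOffset : ZMod 4 ⊕ ZMod 4 → ℤ × ℤ :=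
  Sum.elim ![(0, 0), (1, 0), (1, 1), (0, 1)] ![(0, -1), (2, 0), (1, 2), (-1, 1)]

lemma pinwheelOffset_injective : Function.Injective pinwheelOffset := by decide

lemma pinwheelOffset_mem_Ico (x : ZMod 4 ⊕ ZMod 4) :
    pinwheelOffset x ∈ Set.Ico (-1) 3 ×ˢ Set.Ico (-1) 3 := by
  have : ∀ x, pinwheelOffset x ∈ Finset.Ico (-1) 3 ×ˢ Finset.Ico (-1) 3 := by decide
  simpa using this x

lemma pinwheelOffset_sub_mem_unitSteps {x y : ZMod 4 ⊕ ZMod 4} (h : (sunlet 4).Adj x y) :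
    pinwheelOffset x - pinwheelOffset y ∈ unitSteps ∨
      pinwheelOffset y - pinwheelOffset x ∈ unitSteps := by
  revert x y
  decide

lemma exists_adj_pinwheelOffset_add (d : ℤ × ℤ) (hd : d ∈ unitSteps) (r : ZMod 2 × ZMod 2) :
    ∃ x y, (sunlet 4).Adj x y ∧ pinwheelOffset y = pinwheelOffset x + d ∧
      intCastPair 2 (pinwheelOffset x) = r := by
  revert d r
  decide

def pinwheelMap (m : ℕ) (c : ZMod m × ZMod m) (x : ZMod 4 ⊕ ZMod 4) : ZMod m × ZMod m :=
  c + intCastPair m (pinwheelOffset x)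

lemma pinwheelMap_injective {m : ℕ} (hm : 4 ≤ m) (c : ZMod m × ZMod m) :
    Function.Injective (pinwheelMap m c) := by
  have hwin : Set.Ico (-1 : ℤ) 3 ⊆ Set.Ico (-1) (-1 + m) := Set.Ico_subset_Ico_right (by omega)
  intro x y h
  refine pinwheelOffset_injective (intCastPair_injOn m (-1) (-1) ?_ ?_ (add_left_cancel h))
  · exact Set.prod_mono hwin hwin (pinwheelOffset_mem_Ico x)
  · exact Set.prod_mono hwin hwin (pinwheelOffset_mem_Ico y)

lemma pinwheelMap_adj {m : ℕ} (hm : 4 ≤ m) (c : ZMod m × ZMod m) {x y : ZMod 4 ⊕ ZMod 4}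
    (h : (sunlet 4).Adj x y) : (torGrid m).Adj (pinwheelMap m c x) (pinwheelMap m c y) := by
  rw [torGrid_eq_circulantGraph, circulantGraph_adj]
  refine ⟨(pinwheelMap_injective hm c).ne h.ne, ?_⟩
  simp only [pinwheelMap, add_sub_add_left_eq_sub, ← map_sub]
  exact (pinwheelOffset_sub_mem_unitSteps h).imp (Set.mem_image_of_mem _) (Set.mem_image_of_mem _)

def pinwheel {m : ℕ} (hm : 4 ≤ m) (c : ZMod m × ZMod m) : (sunlet 4).Copy (torGrid m) :=
  Hom.toCopy ⟨pinwheelMap m c, pinwheelMap_adj hm c⟩ (pinwheelMap_injective hm c)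

def evenAnchor (n : ℕ) (q : Fin n × Fin n) : ZMod (2 * n) × ZMod (2 * n) :=
  (((2 * q.1 : ℕ) : ZMod (2 * n)), ((2 * q.2 : ℕ) : ZMod (2 * n)))

lemma exists_natCast_two_mul_eq {n : ℕ} [NeZero n] (z : ZMod (2 * n))
    (hz : ZMod.castHom (dvd_mul_right 2 n) (ZMod 2) z = 0) :
    ∃ a : Fin n, ((2 * a : ℕ) : ZMod (2 * n)) = z := by
  rw [ZMod.castHom_apply, ZMod.cast_eq_val, ZMod.natCast_eq_zero_iff] at hz
  obtain ⟨k, hk⟩ := hz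
  have := ZMod.val_lt z
  exact ⟨⟨k, by omega⟩, by rw [← hk, ZMod.natCast_zmod_val]⟩

lemma exists_mk_add_mem_edgeSet_pinwheel {n : ℕ} (hm : 4 ≤ 2 * n)
    (u : ZMod (2 * n) × ZMod (2 * n)) {d : ℤ × ℤ} (hd : d ∈ unitSteps) :
    ∃ q, s(u, u + intCastPair (2 * n) d) ∈
      (pinwheel hm (evenAnchor n q)).toSubgraph.edgeSet := by
  have : NeZero n := ⟨by omega⟩
  set π := ZMod.castHom (dvd_mul_right 2 n) (ZMod 2)
  obtain ⟨x, y, hxy, hy, hx⟩ := exists_adj_pinwheelOffset_add d hd (π u.1, π u.2)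
  simp only [intCastPair_apply, Prod.mk.injEq] at hx
  -- `pinwheelOffset x` has the parity of `u`, so `c` has even coordinates.
  set c := u - intCastPair (2 * n) (pinwheelOffset x)
  obtain ⟨a, ha⟩ := exists_natCast_two_mul_eq c.1 (by simp [c, π, hx.1])
  obtain ⟨b, hb⟩ := exists_natCast_two_mul_eq c.2 (by simp [c, π, hx.2])
  have hux : pinwheelMap (2 * n) (evenAnchor n (a, b)) x = u := by
    rw [pinwheelMap, show evenAnchor n (a, b) = c from Prod.ext ha hb, sub_add_cancel]
  refine ⟨(a, b), Copy.mem_edgeSet_toSubgraph.2 ⟨s(x, y), hxy, ?_⟩⟩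
  change s(pinwheelMap _ _ x, pinwheelMap _ _ y) = _
  rw [hux, pinwheelMap, hy, map_add, ← add_assoc, ← pinwheelMap, hux]

theorem exists_mem_edgeSet_pinwheel {n : ℕ} (hm : 4 ≤ 2 * n)
    {e : Sym2 (ZMod (2 * n) × ZMod (2 * n))} (he : e ∈ (torGrid (2 * n)).edgeSet) :
    ∃ q : Fin n × Fin n, e ∈ (pinwheel hm (evenAnchor n q)).toSubgraph.edgeSet := by
  induction e using Sym2.ind with | _ u v =>
  rw [mem_edgeSet, torGrid_eq_circulantGraph, circulantGraph_adj] at he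
  obtain ⟨-, ⟨d, hd, hd'⟩ | ⟨d, hd, hd'⟩⟩ := he
  · rw [Sym2.eq_swap, ← add_sub_cancel v u, ← hd']
    exact exists_mk_add_mem_edgeSet_pinwheel hm v hd
  · rw [← add_sub_cancel u v, ← hd']
    exact exists_mk_add_mem_edgeSet_pinwheel hm u hd

/-- For `n ≥ 2`, the edge set of `C_{2n} □ C_{2n}` is partitioned by `n²` subgraphs,
each isomorphic to the sunlet `S¹_4`. -/
theorem sunlet_factorization_squares (n : ℕ) (hn : 2 ≤ n) :
    ∃ F : Fin (n ^ 2) → (torGrid (2 * n)).Subgraph,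
      (∀ i, Nonempty ((F i).coe ≃g sunlet 4)) ∧
      (∀ e ∈ (torGrid (2 * n)).edgeSet, ∃! i, e ∈ (F i).edgeSet) := by
  have hm : 4 ≤ 2 * n := by omega
  let E : Fin (n ^ 2) ≃ Fin n × Fin n := (finCongr (sq n)).trans finProdFinEquiv.symm
  let f : Fin (n ^ 2) → (sunlet 4).Copy (torGrid (2 * n)) :=
    fun i ↦ pinwheel hm (evenAnchor n (E i))
  refine ⟨fun i ↦ (f i).toSubgraph, fun i ↦ ⟨(f i).isoToSubgraph.symm⟩,
    Copy.existsUnique_mem_edgeSet_toSubgraph_of_card_le f (fun e he ↦ ?_) ?_⟩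
  · obtain ⟨q, hq⟩ := exists_mem_edgeSet_pinwheel hm he
    exact ⟨E.symm q, by simpa [f] using hq⟩
  · rw [Nat.card_eq_fintype_card, Fintype.card_fin, natCard_edgeSet_sunlet_four,
      natCard_edgeSet_torGrid (by omega)]
    exact le_of_eq (by ring)
end

section
/- For every integer n ≥ 2, there exist n pairwise vertex-disjoint cycles, each of length 4n, in the toroidal grid C_{2n} □ C_{2n}, whose vertex sets together cover all (2n)² vertices; concretely, for each t ∈ {0,…,n−1} the t-th cycle passes through the vertices (j + 2t, j) and (j + 2t + 1, j) for j ∈ ZMod 2n. -/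
namespace SimpleGraph

variable {V : Type*} {G : SimpleGraph V}

theorem cycleGraph.mem_support_cycle (k : ℕ) (i : Fin (k + 3)) :
    i ∈ (cycleGraph.cycle k).support := by
  have hi : (cycleGraph.cycle k).getVert (k + 3 - i) = i := by
    rw [cycleGraph.getVert_cycle (by omega)]
    ext
    simp [Nat.sub_sub_self i.isLt.le, Nat.mod_eq_of_lt i.isLt]
  exact hi ▸ Walk.getVert_mem_support _ _

theorem Copy.exists_isCycle_of_cycleGraph {m : ℕ} (hm : 3 ≤ m) (f : (cycleGraph m).Copy G) :
    ∃ (u : V) (p : G.Walk u u),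
      p.IsCycle ∧ p.length = m ∧ ∀ x, x ∈ p.support ↔ x ∈ Set.range f := by
  obtain ⟨k, rfl⟩ : ∃ k, m = k + 3 := ⟨m - 3, by omega⟩
  refine ⟨f 0, (cycleGraph.cycle k).map f.toHom,
    (Walk.isCycle_map_iff_of_injective f.injective).mpr cycleGraph.isCycle_cycle, by simp,
    fun x => ?_⟩
  simp [Walk.support_map, cycleGraph.mem_support_cycle]

end SimpleGraph

theorem torGrid_adj_add_one_fst {m : ℕ} [Nontrivial (ZMod m)] (a b : ZMod m) :
    (torGrid m).Adj (a, b) (a + 1, b) := by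
  rw [torGrid, SimpleGraph.fromRel_adj]
  exact ⟨by simp, Or.inl (Or.inr ⟨rfl, rfl⟩)⟩

theorem torGrid_adj_add_one_snd {m : ℕ} [Nontrivial (ZMod m)] (a b : ZMod m) :
    (torGrid m).Adj (a, b) (a, b + 1) := by
  rw [torGrid, SimpleGraph.fromRel_adj]
  exact ⟨by simp, Or.inl (Or.inl ⟨rfl, rfl⟩)⟩

/-- The `k`-th vertex of the `t`-th staircase: it alternates steps in the first and the second
coordinate, starting from `(2t, 0)`. -/
def staircase (n t k : ℕ) : ZMod (2 * n) × ZMod (2 * n) :=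
  (((2 * t + (k + 1) / 2 : ℕ) : ZMod (2 * n)), ((k / 2 : ℕ) : ZMod (2 * n)))

/-- Inverse of `staircase`: the coordinates of `staircase n t k` have difference `2t + k % 2`, and
the second one is `k / 2`. -/
def staircaseIndex (n : ℕ) (x : ZMod (2 * n) × ZMod (2 * n)) : ℕ × ℕ :=
  ((x.1 - x.2).val / 2, 2 * x.2.val + (x.1 - x.2).val % 2)

section staircase

variable {n t : ℕ}

theorem staircase_two_mul (j : ℕ) :
    staircase n t (2 * j) = (2 * (t : ZMod (2 * n)) + j, (j : ZMod (2 * n))) := by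
  rw [staircase, show (2 * j + 1) / 2 = j by omega, show 2 * j / 2 = j by omega]
  push_cast
  rfl

theorem staircase_two_mul_add_one (j : ℕ) :
    staircase n t (2 * j + 1) = (2 * (t : ZMod (2 * n)) + j + 1, (j : ZMod (2 * n))) := by
  rw [staircase, show (2 * j + 1 + 1) / 2 = j + 1 by omega, show (2 * j + 1) / 2 = j by omega]
  push_cast
  rw [add_assoc]

theorem staircase_four_mul : staircase n t (4 * n) = staircase n t 0 := by
  rw [show 4 * n = 2 * (2 * n) by ring, ← mul_zero 2, staircase_two_mul, staircase_two_mul,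
    ZMod.natCast_self]
  simp

theorem staircase_adj_succ (k : ℕ) :
    (torGrid (2 * n)).Adj (staircase n t k) (staircase n t (k + 1)) := by
  have : Nontrivial (ZMod (2 * n)) := ZMod.nontrivial_iff.mpr (by omega)
  obtain ⟨j, rfl | rfl⟩ := Nat.even_or_odd' k
  · rw [staircase_two_mul, staircase_two_mul_add_one]
    exact torGrid_adj_add_one_fst _ _
  · rw [staircase_two_mul_add_one, show 2 * j + 1 + 1 = 2 * (j + 1) by ring, staircase_two_mul]
    push_cast
    rw [← add_assoc]
    exact torGrid_adj_add_one_snd _ _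

theorem staircaseIndex_staircase {k : ℕ} (ht : t < n) (hk : k < 4 * n) :
    staircaseIndex n (staircase n t k) = (t, k) := by
  have hdiff :
      (staircase n t k).1 - (staircase n t k).2 = ((2 * t + k % 2 : ℕ) : ZMod (2 * n)) := by
    rw [staircase, show 2 * t + (k + 1) / 2 = 2 * t + k % 2 + k / 2 by omega, Nat.cast_add]
    ring
  simp only [staircaseIndex, hdiff]
  rw [ZMod.val_cast_of_lt (by omega), staircase, ZMod.val_cast_of_lt (by omega)]
  ext <;> simp only <;> omega

variable [NeZero n]

theorem staircaseIndex_lt (x : ZMod (2 * n) × ZMod (2 * n)) :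
    (staircaseIndex n x).1 < n ∧ (staircaseIndex n x).2 < 4 * n := by
  have h₁ := (x.1 - x.2).val_lt
  have h₂ := x.2.val_lt
  constructor <;> simp only [staircaseIndex] <;> omega

theorem staircase_staircaseIndex (x : ZMod (2 * n) × ZMod (2 * n)) :
    staircase n (staircaseIndex n x).1 (staircaseIndex n x).2 = x := by
  obtain ⟨a, b⟩ := x
  simp only [staircase, staircaseIndex]
  rw [show 2 * ((a - b).val / 2) + (2 * b.val + (a - b).val % 2 + 1) / 2 = (a - b).val + b.val by
      omega,
    show (2 * b.val + (a - b).val % 2) / 2 = b.val by omega]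
  simp

end staircase

def staircaseHom (n t : ℕ) : SimpleGraph.cycleGraph (4 * n) →g torGrid (2 * n) where
  toFun i := staircase n t i
  map_rel' {i j} hij := by
    wlog hji : (j - i).val = 1 generalizing i j
    · exact (this (SimpleGraph.adj_symm _ hij)
        ((SimpleGraph.cycleGraph_adj'.mp hij).resolve_right hji)).symm
    rcases le_or_gt i j with hle | hlt
    · rw [Fin.coe_sub_iff_le.mpr hle] at hji
      rw [show (j : ℕ) = i + 1 by omega]
      exact staircase_adj_succ _
    · rw [Fin.coe_sub_iff_lt.mpr hlt] at hji
      have h := staircase_adj_succ (n := n) (t := t) i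
      rwa [show (i : ℕ) + 1 = 4 * n by omega, staircase_four_mul,
        ← show (j : ℕ) = 0 by omega] at h

def staircaseCopy {n : ℕ} (t : Fin n) : (SimpleGraph.cycleGraph (4 * n)).Copy (torGrid (2 * n)) :=
  (staircaseHom n t).toCopy fun i j hij => by
    change staircase n t i = staircase n t j at hij
    have := congrArg (staircaseIndex n) hij
    rw [staircaseIndex_staircase t.isLt i.isLt, staircaseIndex_staircase t.isLt j.isLt] at this
    exact Fin.ext (Prod.mk.inj this).2

theorem mem_range_staircaseCopy {n : ℕ} {t : Fin n} {x : ZMod (2 * n) × ZMod (2 * n)} :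
    x ∈ Set.range (staircaseCopy t) ↔ ∃ k < 4 * n, staircase n t k = x := by
  simp [staircaseCopy, staircaseHom, Fin.exists_iff]

/-- For `n ≥ 2` there are `n` pairwise vertex-disjoint cycles of length `4n` in
`C_{2n} □ C_{2n}` covering all vertices, where the `t`-th cycle passes through the
vertices `(j + 2t, j)` and `(j + 2t + 1, j)` for all `j`. -/
theorem disjoint_staircases (n : ℕ) (hn : 2 ≤ n) :
    ∃ (v : Fin n → ZMod (2 * n) × ZMod (2 * n))
      (c : (t : Fin n) → (torGrid (2 * n)).Walk (v t) (v t)),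
      (∀ t, (c t).IsCycle) ∧
      (∀ t, (c t).length = 4 * n) ∧
      (∀ t t', t ≠ t' → ∀ x, x ∈ (c t).support → x ∉ (c t').support) ∧
      (∀ x : ZMod (2 * n) × ZMod (2 * n), ∃ t, x ∈ (c t).support) ∧
      (∀ (t : Fin n) (j : ZMod (2 * n)),
        (j + 2 * (t.val : ZMod (2 * n)), j) ∈ (c t).support ∧
        (j + 2 * (t.val : ZMod (2 * n)) + 1, j) ∈ (c t).support) := by
  have : NeZero n := ⟨by omega⟩
  choose v c hcycle hlen hsupport using
    fun t : Fin n => (staircaseCopy t).exists_isCycle_of_cycleGraph (by omega : 3 ≤ 4 * n)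
  refine ⟨v, c, hcycle, hlen, ?_, ?_, ?_⟩ <;> simp only [hsupport, mem_range_staircaseCopy]
  · rintro t t' hne x ⟨k, hk, rfl⟩ ⟨k', hk', hkk⟩
    have := congrArg (staircaseIndex n) hkk
    rw [staircaseIndex_staircase t'.isLt hk', staircaseIndex_staircase t.isLt hk] at this
    exact hne (Fin.ext (Prod.mk.inj this).1.symm)
  · intro x
    exact ⟨⟨_, (staircaseIndex_lt x).1⟩, _, (staircaseIndex_lt x).2,
      staircase_staircaseIndex x⟩
  · intro t j
    have := j.val_lt
    refine ⟨⟨2 * j.val, by omega, ?_⟩, ⟨2 * j.val + 1, by omega, ?_⟩⟩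
    · simp [staircase_two_mul, add_comm]
    · rw [staircase_two_mul_add_one]
      simp [add_comm]
end
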